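/- arXiv:2501.09448 — 11 statements merged into one kernel-verified Lean document; each statement's English description precedes it below -/
import Mathlib

section
/- For natural numbers A, C and positive natural numbers m, n, if A * m^2 = C * n^2, then the product A * C is a perfect square. (Equivalently: if A*C is not a perfect square, then no positive integers m, n can satisfy A*m^2 = C*n^2; this is the arithmetic core of Proposition X.9[4] of the Elements.) -/
theorem arithmetic_core_X9 (A C m n : ℕ) (hm : 0 < m) (hn : 0 < n)
    (h : A * m ^ 2 = C * n ^ 2) : IsSquare (A * C) := by
  have key : A * C * (m ^ 2) ^ 2 = (C * n * m) ^ 2 := by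
    calc A * C * (m ^ 2) ^ 2 = (A * m ^ 2) * (C * m ^ 2) := by ring
      _ = (C * n ^ 2) * (C * m ^ 2) := by rw [h]
      _ = (C * n * m) ^ 2 := by ring
  have hdvd : m ^ 2 ∣ C * n * m := by
    rw [← Nat.pow_dvd_pow_iff (two_ne_zero), ← key]
    exact ⟨A * C, by ring⟩
  obtain ⟨d, hd⟩ := hdvd
  refine ⟨d, ?_⟩
  have hm2 : (m ^ 2) ^ 2 ≠ 0 := by positivity
  have : A * C * (m ^ 2) ^ 2 = d * d * (m ^ 2) ^ 2 := by rw [key, hd]; ring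
  exact Nat.eq_of_mul_eq_mul_right (Nat.pos_of_ne_zero hm2) this
end

section
/- Theaetetus' theorem (weak form): Let A and C be natural numbers such that A * C is not a perfect square, and let a and b be positive real numbers with A * a^2 = C * b^2. Then a/b is irrational (a and b are incommensurable). -/
theorem theaetetus_weak (A C : ℕ) (hAC : ¬ IsSquare (A * C))
    (a b : ℝ) (ha : 0 < a) (hb : 0 < b)
    (h : (A : ℝ) * a ^ 2 = (C : ℝ) * b ^ 2) : Irrational (a / b) := by
  have hA : (0:ℝ) < A := by
    rcases Nat.eq_zero_or_pos A with h0 | h0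
    · exfalso; apply hAC; simp [h0]
    · exact_mod_cast h0
  have hsq : Irrational (Real.sqrt ((A * C : ℕ) : ℝ)) :=
    irrational_sqrt_natCast_iff.mpr hAC
  have key : Real.sqrt ((A * C : ℕ) : ℝ) = (A : ℝ) * (a / b) := by
    rw [show ((A * C : ℕ) : ℝ) = ((A:ℝ) * (a/b))^2 by
      push_cast
      field_simp
      nlinarith [sq_nonneg a, sq_nonneg b]]
    exact Real.sqrt_sq (by positivity)
  rw [key] at hsq
  intro ⟨q, hq⟩
  exact hsq ⟨(A : ℚ) * q, by push_cast [hq]; ring⟩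
end

section
/- Theaetetus' theorem (strong form, pure quadratic case): Let A and C be positive natural numbers such that A * C is not a perfect square, and let a and b be real numbers with 0 < b < a and A * a^2 = C * b^2. Then the anthyphairesis of a to b is eventually periodic: writing s for the sequence of partial denominators of GenContFract.of (a/b), there exist N and p > 0 such that s.get? (n + p) = s.get? n for all n ≥ N. -/
open GenContFract Real

/-- The sequence of fractional parts arising in the continued fraction algorithm. -/
noncomputable def cfFrac (v : ℝ) : ℕ → ℝ
  | 0 => Int.fract v
  | n + 1 => Int.fract (cfFrac v n)⁻¹

lemma cfFrac_irrational {v : ℝ} (hv : Irrational v) : ∀ n, Irrational (cfFrac v n) := by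
  intro n
  induction n with
  | zero =>
    show Irrational (Int.fract v)
    rw [← Int.self_sub_floor]; exact hv.sub_intCast _
  | succ n ih =>
    show Irrational (Int.fract (cfFrac v n)⁻¹)
    rw [← Int.self_sub_floor]; exact ih.inv.sub_intCast _

lemma cfFrac_stream {v : ℝ} (hv : Irrational v) :
    ∀ n, IntFractPair.stream v (n + 1) = some (IntFractPair.of (cfFrac v n)⁻¹) := by
  intro n
  induction n with
  | zero =>
    have h0 : (IntFractPair.of v).fr = Int.fract v := rfl
    have hne : (IntFractPair.of v).fr ≠ 0 := by
      rw [h0, ← Int.self_sub_floor]; exact (hv.sub_intCast _).ne_zero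
    simpa [h0, cfFrac] using IntFractPair.stream_succ_of_some (IntFractPair.stream_zero v) hne
  | succ n ih =>
    have hfr : (IntFractPair.of (cfFrac v n)⁻¹).fr = cfFrac v (n + 1) := rfl
    have hne : (IntFractPair.of (cfFrac v n)⁻¹).fr ≠ 0 := by
      rw [hfr]; exact (cfFrac_irrational hv (n + 1)).ne_zero
    have := IntFractPair.stream_succ_of_some ih hne
    rwa [hfr] at this

set_option maxHeartbeats 1000000 in
theorem theaetetus_strong_pure_quadratic (A C : ℕ) (hA : 1 ≤ A) (hC : 1 ≤ C)
    (hAC : ¬ IsSquare (A * C)) (a b : ℝ) (hb : 0 < b) (hba : b < a)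
    (h : (A : ℝ) * a ^ 2 = (C : ℝ) * b ^ 2) :
    ∃ N p : ℕ, 0 < p ∧ ∀ n ≥ N,
      (GenContFract.of (a / b)).partDens.get? (n + p) =
        (GenContFract.of (a / b)).partDens.get? n := by
  set v : ℝ := a / b with hvdef
  set D : ℕ := A * C with hDdef
  set r : ℝ := Real.sqrt D with hrdef
  have hA0 : (0:ℝ) < A := by exact_mod_cast hA
  have hv1 : 1 < v := (one_lt_div hb).mpr hba
  have hv0 : 0 < v := lt_trans one_pos hv1
  have hv2 : (A:ℝ) * v ^ 2 = C := by
    rw [hvdef]; field_simp; linarith [h]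
  have hAv2 : ((A:ℝ) * v) ^ 2 = (D:ℝ) := by
    have h' : ((A:ℝ) * v) ^ 2 = (A:ℝ) * ((A:ℝ) * v ^ 2) := by ring
    rw [h', hv2, hDdef]; push_cast; ring
  have hAv : (A:ℝ) * v = r := by
    rw [hrdef, ← hAv2, Real.sqrt_sq (by positivity)]
  have hrirr : Irrational r := by
    rw [hrdef]; exact irrational_sqrt_natCast_iff.mpr hAC
  have hvirr : Irrational v := by
    have hveq : v = r / (A:ℕ) := by rw [← hAv]; field_simp
    rw [hveq]
    exact hrirr.div_natCast (by omega)
  have hr0 : 0 < r := by rw [← hAv]; positivity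
  have hr2 : r ^ 2 = (D:ℝ) := Real.sq_sqrt (by positivity)
  have hD0 : 0 < D := by rw [hDdef]; positivity
  have hD1 : (1:ℝ) ≤ (D:ℝ) := by exact_mod_cast hD0
  have hrD : r ≤ (D:ℝ) := by
    rw [hrdef, Real.sqrt_le_left (by positivity)]
    nlinarith
  set g : ℕ → ℝ := cfFrac v with hgdef
  have hgirr : ∀ n, Irrational (g n) := cfFrac_irrational hvirr
  have hg0 : ∀ n, 0 < g n := fun n =>
    lt_of_le_of_ne (by cases n <;> exact Int.fract_nonneg _) (Ne.symm (hgirr n).ne_zero)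
  have hg1 : ∀ n, g n < 1 := by
    intro n
    cases n with
    | zero => exact Int.fract_lt_one v
    | succ m => exact Int.fract_lt_one _
  have hy1 : ∀ n, 1 < (g n)⁻¹ := fun n => (one_lt_inv₀ (hg0 n)).mpr (hg1 n)
  -- the integer P cannot square to D
  have hnsq : ∀ P : ℤ, P ^ 2 ≠ (D:ℤ) := by
    intro P hP
    apply hAC
    refine ⟨P.natAbs, ?_⟩
    have h2 : ((P.natAbs * P.natAbs : ℕ) : ℤ) = (D:ℤ) := by
      rw [Int.natAbs_mul_self, ← hP]; ring
    exact_mod_cast h2.symm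
  have hrne : ∀ P : ℤ, r ≠ (P:ℝ) := fun P => hrirr.ne_int P
  -- Main structural claim: every complete quotient (g n)⁻¹ has the form (P + r)/Q
  -- with integer P, Q, Q ∣ P² - D, and conjugate (P - r)/Q in (-1, 0).
  have hsucc : ∀ m : ℕ, g (m + 1) = Int.fract (g m)⁻¹ := fun m => rfl
  have hAint : (1:ℤ) ≤ (A:ℤ) := by exact_mod_cast hA
  have key : ∀ n, ∃ P Q : ℤ, 0 < Q ∧ Q ∣ P ^ 2 - (D:ℤ) ∧
      (g n)⁻¹ = ((P:ℝ) + r) / (Q:ℝ) ∧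
      -1 < ((P:ℝ) - r) / (Q:ℝ) ∧ ((P:ℝ) - r) / (Q:ℝ) < 0 := by
    intro n
    induction n with
    | zero =>
      set a0 : ℤ := ⌊v⌋ with ha0def
      have ha0 : 1 ≤ a0 := Int.le_floor.mpr (by exact_mod_cast hv1.le)
      set P : ℤ := a0 * (A:ℤ) with hPdef
      have hAdvd : (A:ℤ) ∣ (D:ℤ) - P ^ 2 := by
        refine dvd_sub ⟨(C:ℤ), by rw [hDdef]; push_cast; ring⟩ ⟨a0 ^ 2 * A, by rw [hPdef]; ring⟩
      set Q : ℤ := ((D:ℤ) - P ^ 2) / A with hQdef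
      have hQmul : (A:ℤ) * Q = (D:ℤ) - P ^ 2 := Int.mul_ediv_cancel' hAdvd
      have hQmulR : (A:ℝ) * (Q:ℝ) = (D:ℝ) - (P:ℝ) ^ 2 := by exact_mod_cast hQmul
      have hP1 : 1 ≤ P := by
        calc (1:ℤ) = 1 * 1 := by ring
        _ ≤ a0 * A := mul_le_mul ha0 hAint one_pos.le (by linarith)
        _ = P := by rw [hPdef]
      have hP0R : (0:ℝ) < (P:ℝ) := by exact_mod_cast hP1
      have hPltr : (P:ℝ) < r := by
        have h1 : (a0:ℝ) ≤ v := Int.floor_le v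
        have h2 : (P:ℝ) ≤ r := by
          rw [← hAv, hPdef]; push_cast; nlinarith [h1, hA0]
        exact lt_of_le_of_ne h2 (Ne.symm (hrne P))
      have hDP : (0:ℤ) < (D:ℤ) - P ^ 2 := by
        have hsq : (P:ℝ) ^ 2 < (D:ℝ) := by nlinarith [hPltr, hP0R, hr2]
        exact_mod_cast (by linarith : (0:ℝ) < (D:ℝ) - (P:ℝ) ^ 2)
      have hQpos : 0 < Q := by
        have hAQ : 0 < (A:ℤ) * Q := by rw [hQmul]; exact hDP
        rcases mul_pos_iff.mp hAQ with ⟨_, h'⟩ | ⟨h', _⟩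
        · exact h'
        · linarith
      have hQR : (0:ℝ) < (Q:ℝ) := by exact_mod_cast hQpos
      have hrPne : r - (P:ℝ) ≠ 0 := sub_ne_zero.mpr (hrne P)
      have hg0v : g 0 = (r - (P:ℝ)) / (A:ℝ) := by
        have h1 : g 0 = v - (a0:ℝ) := by
          show Int.fract v = _
          rw [Int.fract, ha0def]
        rw [h1, ← hAv, hPdef]
        push_cast
        field_simp
      have hPrne : (P:ℝ) + r ≠ 0 := by positivity
      refine ⟨P, Q, hQpos, ?_, ?_, ?_, ?_⟩
      · have hPD : P ^ 2 - (D:ℤ) = -((A:ℤ) * Q) := by linarith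
        rw [hPD]
        exact dvd_neg.mpr (dvd_mul_left Q A)
      · rw [hg0v, inv_div, div_eq_div_iff hrPne (ne_of_gt hQR)]
        linear_combination hQmulR - hr2
      · have hAleP : (A:ℝ) ≤ (P:ℝ) := by
          have : (A:ℤ) ≤ P := by nlinarith
          exact_mod_cast this
        have hc : ((P:ℝ) - r) / (Q:ℝ) = (-(A:ℝ)) / ((P:ℝ) + r) := by
          rw [div_eq_div_iff (ne_of_gt hQR) hPrne]
          linear_combination hQmulR - hr2
        rw [hc]
        have hd : (A:ℝ) / ((P:ℝ) + r) < 1 := (div_lt_one (by positivity)).mpr (by linarith)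
        rw [neg_div]
        linarith
      · have hc : ((P:ℝ) - r) / (Q:ℝ) = (-(A:ℝ)) / ((P:ℝ) + r) := by
          rw [div_eq_div_iff (ne_of_gt hQR) hPrne]
          linear_combination hQmulR - hr2
        rw [hc]
        exact div_neg_of_neg_of_pos (by linarith) (by positivity)
    | succ n ih =>
      obtain ⟨P, Q, hQpos, hdvd, hyeq, hcm1, hc0⟩ := ih
      have hQR : (0:ℝ) < (Q:ℝ) := by exact_mod_cast hQpos
      set aq : ℤ := ⌊(g n)⁻¹⌋ with haqdef
      have ha1 : 1 ≤ aq := Int.le_floor.mpr (by exact_mod_cast (hy1 n).le)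
      have ha1R : (1:ℝ) ≤ (aq:ℝ) := by exact_mod_cast ha1
      set P' : ℤ := aq * Q - P with hP'def
      have hdvd' : Q ∣ (D:ℤ) - P' ^ 2 := by
        have h3 : (D:ℤ) - P' ^ 2 = -(P ^ 2 - (D:ℤ)) + Q * (2 * aq * P - aq ^ 2 * Q) := by
          rw [hP'def]; ring
        rw [h3]
        exact dvd_add (dvd_neg.mpr hdvd) (dvd_mul_right Q _)
      set Q' : ℤ := ((D:ℤ) - P' ^ 2) / Q with hQ'def
      have hQ'mul : Q * Q' = (D:ℤ) - P' ^ 2 := Int.mul_ediv_cancel' hdvd'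
      have hQ'mulR : (Q:ℝ) * (Q':ℝ) = (D:ℝ) - (P':ℝ) ^ 2 := by exact_mod_cast hQ'mul
      have hQ'ne : Q' ≠ 0 := by
        intro h0
        apply hnsq P'
        rw [h0, mul_zero] at hQ'mul
        linarith
      have hQ'Rne : (Q':ℝ) ≠ 0 := by exact_mod_cast hQ'ne
      have hrP'ne : r - (P':ℝ) ≠ 0 := sub_ne_zero.mpr (hrne P')
      -- P' + r > Q from the conjugate bound
      have hca : ((P:ℝ) - r) / (Q:ℝ) - (aq:ℝ) = -(((P':ℝ) + r) / (Q:ℝ)) := by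
        rw [hP'def]
        push_cast
        field_simp
        ring
      have h4 : -(((P':ℝ) + r) / (Q:ℝ)) < -1 := by rw [← hca]; linarith
      have h5 : (1:ℝ) < ((P':ℝ) + r) / (Q:ℝ) := by linarith
      have hQltP' : (Q:ℝ) < (P':ℝ) + r := by
        have := (lt_div_iff₀ hQR).mp h5
        linarith
      have hP'rpos : (0:ℝ) < (P':ℝ) + r := lt_trans hQR hQltP'
      have hP'rne : (P':ℝ) + r ≠ 0 := ne_of_gt hP'rpos
      -- value of g (n+1)
      have hgn1 : g (n + 1) = (r - (P':ℝ)) / (Q:ℝ) := by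
        rw [hsucc n, Int.fract, ← haqdef, hyeq, hP'def]
        push_cast
        field_simp
        ring
      have hy' : (g (n + 1))⁻¹ = ((P':ℝ) + r) / (Q':ℝ) := by
        rw [hgn1, inv_div, div_eq_div_iff hrP'ne hQ'Rne]
        linear_combination hQ'mulR - hr2
      have hc'eq : ((P':ℝ) - r) / (Q':ℝ) = (-(Q:ℝ)) / ((P':ℝ) + r) := by
        rw [div_eq_div_iff hQ'Rne hP'rne]
        linear_combination hQ'mulR - hr2
      have hQ'Rpos : (0:ℝ) < (Q':ℝ) := by
        have hy'pos : (0:ℝ) < ((P':ℝ) + r) / (Q':ℝ) := by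
          rw [← hy']
          linarith [hy1 (n + 1)]
        rcases div_pos_iff.mp hy'pos with ⟨_, h⟩ | ⟨h, _⟩
        · exact h
        · linarith
      have hQ'pos : 0 < Q' := by exact_mod_cast hQ'Rpos
      refine ⟨P', Q', hQ'pos, ?_, hy', ?_, ?_⟩
      · have hPD : P' ^ 2 - (D:ℤ) = -(Q * Q') := by linarith
        rw [hPD]
        exact dvd_neg.mpr (dvd_mul_left Q' Q)
      · rw [hc'eq]
        have hd : (Q:ℝ) / ((P':ℝ) + r) < 1 := (div_lt_one hP'rpos).mpr hQltP'
        rw [neg_div]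
        linarith
      · rw [hc'eq]
        exact div_neg_of_neg_of_pos (by linarith) hP'rpos
  -- choose representatives and bound them
  choose Pf Qf hQfpos hQfdvd hyf hcf1 hcf2 using key
  set S : Finset (ℤ × ℤ) := Finset.Icc ((1:ℤ), (1:ℤ)) ((D:ℤ), (2*(D:ℤ))) with hSdef
  have hbound : ∀ n, (Pf n, Qf n) ∈ S := by
    intro n
    have hQR : (0:ℝ) < (Qf n : ℝ) := by exact_mod_cast hQfpos n
    have hy := hyf n
    have hc1 := hcf1 n
    have hc2 := hcf2 n
    have hygt : (1:ℝ) < ((Pf n : ℝ) + r) / (Qf n : ℝ) := by rw [← hy]; exact hy1 n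
    have hsum2 : ((Pf n : ℝ) + r) / (Qf n : ℝ) + ((Pf n : ℝ) - r) / (Qf n : ℝ)
        = (2 * (Pf n : ℝ)) / (Qf n : ℝ) := by ring
    have hPpos : (0:ℝ) < (Pf n : ℝ) := by
      have hsum : (0:ℝ) < (2 * (Pf n : ℝ)) / (Qf n : ℝ) := by
        rw [← hsum2]; linarith
      rcases div_pos_iff.mp hsum with ⟨h', _⟩ | ⟨_, h'⟩
      · linarith
      · linarith
    have hP1 : 1 ≤ Pf n := by
      have : (0:ℤ) < Pf n := by exact_mod_cast hPpos
      omega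
    have hPltr : (Pf n : ℝ) < r := by
      rcases div_neg_iff.mp hc2 with ⟨_, h'⟩ | ⟨h', _⟩
      · linarith
      · linarith
    have hPleD : Pf n ≤ (D:ℤ) := by
      have h' : (Pf n : ℝ) < (D:ℝ) := lt_of_lt_of_le hPltr hrD
      have : Pf n < (D:ℤ) := by exact_mod_cast h'
      omega
    have hQlt : (Qf n : ℝ) < (Pf n : ℝ) + r := by
      have := (lt_div_iff₀ hQR).mp hygt
      linarith
    have hQle : Qf n ≤ 2 * (D:ℤ) := by
      have h' : (Qf n : ℝ) < 2 * (D:ℝ) := by linarith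
      have : Qf n < 2 * (D:ℤ) := by exact_mod_cast h'
      omega
    rw [hSdef, Finset.mem_Icc]
    exact ⟨Prod.mk_le_mk.mpr ⟨hP1, by exact_mod_cast hQfpos n⟩,
      Prod.mk_le_mk.mpr ⟨hPleD, hQle⟩⟩
  -- pigeonhole
  obtain ⟨m', hm', n', hn', hne, hfe⟩ :=
    Finset.exists_ne_map_eq_of_card_lt_of_maps_to
      (s := Finset.range (S.card + 1)) (t := S)
      (by simp) (fun n _ => hbound n)
  obtain ⟨m, n, hmn, hPQ⟩ : ∃ m n, m < n ∧ (Pf m, Qf m) = (Pf n, Qf n) := by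
    rcases hne.lt_or_gt with h' | h'
    · exact ⟨m', n', h', hfe⟩
    · exact ⟨n', m', h', hfe.symm⟩
  have hPeq : Pf m = Pf n := congrArg Prod.fst hPQ
  have hQeq : Qf m = Qf n := congrArg Prod.snd hPQ
  have hgmn : g m = g n := by
    have h' : (g m)⁻¹ = (g n)⁻¹ := by rw [hyf m, hyf n, hPeq, hQeq]
    exact inv_injective h'
  refine ⟨m, n - m, by omega, ?_⟩
  have hper : ∀ k, m ≤ k → g (k + (n - m)) = g k := by
    intro k hk
    induction k, hk using Nat.le_induction with
    | base =>
      rw [show m + (n - m) = n from by omega]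
      exact hgmn.symm
    | succ k hk ih =>
      rw [show k + 1 + (n - m) = (k + (n - m)) + 1 from by omega,
        hsucc (k + (n - m)), hsucc k, ih]
  intro k hk
  have hpd : ∀ j : ℕ, (GenContFract.of v).partDens.get? j
      = some (((IntFractPair.of (g j)⁻¹).b : ℝ)) := by
    intro j
    have hs := GenContFract.get?_of_eq_some_of_succ_get?_intFractPair_stream
      (cfFrac_stream hvirr j)
    rw [GenContFract.partDens, Stream'.Seq.map_get?, hs]
    rfl
  rw [hpd (k + (n - m)), hpd k, hper k hk]
end

section
/- Theaetetus' general periodicity theorem (quadratic in excess): Let A, B, C be natural numbers with A ≥ 1 and C ≥ 1 such that the discriminant B^2 + 4*A*C is not a perfect square, and let a, b be real numbers with 0 < b < a satisfying A * a^2 = B * (a*b) + C * b^2. Then the anthyphairesis of a to b is eventually periodic: writing s for the sequence of partial denominators of GenContFract.of (a/b), there exist N and p > 0 such that s.get? (n + p) = s.get? n for all n ≥ N. -/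
open GenContFract

/-- The sequence of complete quotients of `v`. -/
noncomputable def theaQ (v : ℝ) : ℕ → ℝ
  | 0 => v
  | n + 1 => (Int.fract (theaQ v n))⁻¹

/-- The sequence of integer coefficient triples of the quadratics satisfied by the
complete quotients. -/
noncomputable def theaT (v : ℝ) (A B C : ℤ) : ℕ → ℤ × ℤ × ℤ
  | 0 => (A, B, C)
  | n + 1 =>
      ((theaT v A B C n).2.1 * ⌊theaQ v n⌋ + (theaT v A B C n).2.2
          - (theaT v A B C n).1 * ⌊theaQ v n⌋ ^ 2,
        2 * (theaT v A B C n).1 * ⌊theaQ v n⌋ - (theaT v A B C n).2.1,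
        (theaT v A B C n).1)

lemma thea_root_unique (A B C : ℤ) (hA : 1 ≤ A) (hC : 1 ≤ C) {t u : ℝ}
    (ht : 0 < t) (hu : 0 < u)
    (h1 : (A : ℝ) * t ^ 2 = B * t + C) (h2 : (A : ℝ) * u ^ 2 = B * u + C) : t = u := by
  by_contra hne
  have h3 : (t - u) * ((A : ℝ) * (t + u) - B) = 0 := by linear_combination h1 - h2
  have hAR : (1 : ℝ) ≤ A := by exact_mod_cast hA
  have hCR : (1 : ℝ) ≤ C := by exact_mod_cast hC
  rcases mul_eq_zero.mp h3 with h4 | h4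
  · exact hne (by linarith [sub_eq_zero.mp h4])
  · have hB : (B : ℝ) = A * (t + u) := by linarith
    have h5 : (A : ℝ) * t * u + C = 0 := by linear_combination -h1 - t * hB
    nlinarith [mul_pos ht hu]

lemma thea_invariant (v : ℝ) (A B C : ℤ) (hA : 1 ≤ A) (hC : 1 ≤ C)
    (hv : 1 < v) (hirr : Irrational v) (hq : (A : ℝ) * v ^ 2 = B * v + C) :
    ∀ n, 1 ≤ (theaT v A B C n).1 ∧ 1 ≤ (theaT v A B C n).2.2 ∧
      (theaT v A B C n).2.1 ^ 2 + 4 * (theaT v A B C n).1 * (theaT v A B C n).2.2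
        = B ^ 2 + 4 * A * C ∧
      ((theaT v A B C n).1 : ℝ) * (theaQ v n) ^ 2
        = ((theaT v A B C n).2.1 : ℝ) * theaQ v n + ((theaT v A B C n).2.2 : ℝ) ∧
      1 < theaQ v n ∧ Irrational (theaQ v n) := by
  intro n
  induction n with
  | zero => exact ⟨hA, hC, by simp [theaT], hq, hv, hirr⟩
  | succ n ih =>
    obtain ⟨hA', hC', hD', hq', hx1, hxirr⟩ := ih
    set x := theaQ v n with hxdef
    set A' := (theaT v A B C n).1 with hA'def
    set B' := (theaT v A B C n).2.1 with hB'def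
    set C' := (theaT v A B C n).2.2 with hC'def
    set a : ℤ := ⌊x⌋ with hadef
    have hTsucc : theaT v A B C (n + 1)
        = (B' * a + C' - A' * a ^ 2, 2 * A' * a - B', A') := rfl
    set f := Int.fract x with hfdef
    have hQsucc : theaQ v (n + 1) = f⁻¹ := rfl
    have hfpos : 0 < f := Int.fract_pos.mpr (hxirr.ne_int a)
    have hflt : f < 1 := Int.fract_lt_one x
    have hfx : (a : ℝ) + f = x := Int.floor_add_fract x
    have ha1 : 1 ≤ a := Int.le_floor.mpr (by exact_mod_cast hx1.le)
    have hfne : f ≠ 0 := ne_of_gt hfpos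
    set x' := f⁻¹ with hx'def
    have hxf : x' * f = 1 := inv_mul_cancel₀ hfne
    have hx'1 : 1 < x' := by
      nlinarith [mul_pos (inv_pos.mpr hfpos) (show (0:ℝ) < 1 - f by linarith), hxf]
    have hfirr : Irrational f := by
      rw [hfdef]
      have := hxirr.sub_intCast a
      rwa [Int.self_sub_floor] at this
    have hx'irr : Irrational x' := hfirr.inv
    have haR : (1 : ℝ) ≤ (a : ℝ) := by exact_mod_cast ha1
    have hA'R : (1 : ℝ) ≤ (A' : ℝ) := by exact_mod_cast hA'
    have hC'R : (1 : ℝ) ≤ (C' : ℝ) := by exact_mod_cast hC'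
    -- rewrite the quadratic in terms of a + f
    rw [← hfx] at hq'
    have h2 : (B' : ℝ) * a + C' - A' * a ^ 2
        = (2 * (A' : ℝ) * a - B') * f + (A' : ℝ) * f ^ 2 := by
      linear_combination -hq'
    -- positivity of the new leading coefficient
    have h3 : ((B' : ℝ) * a + C' - A' * a ^ 2) * ((a : ℝ) + f)
        = f * ((A' : ℝ) * a * ((a : ℝ) + f) + C') := by
      linear_combination -(a : ℝ) * hq'
    have hApos : (0 : ℝ) < (B' : ℝ) * a + C' - A' * a ^ 2 := by
      have hp1 : (0 : ℝ) < (A' : ℝ) * a * ((a : ℝ) + f) :=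
        mul_pos (mul_pos (by linarith) (by linarith)) (by linarith)
      have hr : (0 : ℝ) < f * ((A' : ℝ) * a * ((a : ℝ) + f) + C') :=
        mul_pos hfpos (by linarith)
      nlinarith
    have hA1 : 1 ≤ B' * a + C' - A' * a ^ 2 := by
      have : (0 : ℤ) < B' * a + C' - A' * a ^ 2 := by exact_mod_cast hApos
      omega
    refine ⟨?_, ?_, ?_, ?_, ?_, ?_⟩
    · rw [hTsucc]; exact hA1
    · rw [hTsucc]; exact hA'
    · rw [hTsucc]
      show (2 * A' * a - B') ^ 2 + 4 * (B' * a + C' - A' * a ^ 2) * A' = B ^ 2 + 4 * A * C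
      rw [← hD']; ring
    · rw [hTsucc, hQsucc]
      show ((B' * a + C' - A' * a ^ 2 : ℤ) : ℝ) * x' ^ 2
          = ((2 * A' * a - B' : ℤ) : ℝ) * x' + (A' : ℝ)
      push_cast
      linear_combination x' ^ 2 * h2 + ((2 * (A' : ℝ) * a - B') * x' + (A' : ℝ) * (x' * f + 1)) * hxf
    · rw [hQsucc]; exact hx'1
    · rw [hQsucc]; exact hx'irr

lemma thea_stream (v : ℝ) (hirr : ∀ n, Irrational (theaQ v n)) :
    ∀ n, IntFractPair.stream v n = some (IntFractPair.of (theaQ v n)) := by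
  intro n
  induction n with
  | zero => rfl
  | succ n ih =>
    have hfr : (IntFractPair.of (theaQ v n)).fr ≠ 0 := by
      have := Int.fract_pos.mpr ((hirr n).ne_int ⌊theaQ v n⌋)
      simpa [IntFractPair.of] using this.ne'
    exact IntFractPair.stream_succ_of_some ih hfr

lemma thea_int_le_sq (m : ℤ) : m ≤ m ^ 2 := by
  rcases le_or_gt m 0 with h | h
  · exact h.trans (sq_nonneg m)
  · nlinarith

theorem theaetetus_periodicity_excess (A B C : ℕ) (hA : 1 ≤ A) (hC : 1 ≤ C)
    (hdisc : ¬ IsSquare (B ^ 2 + 4 * A * C)) (a b : ℝ) (hb : 0 < b) (hba : b < a)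
    (h : (A : ℝ) * a ^ 2 = (B : ℝ) * (a * b) + (C : ℝ) * b ^ 2) :
    ∃ N p : ℕ, 0 < p ∧ ∀ n ≥ N,
      (GenContFract.of (a / b)).partDens.get? (n + p) =
        (GenContFract.of (a / b)).partDens.get? n := by
  set v : ℝ := a / b with hvdef
  have hv1 : 1 < v := (one_lt_div hb).mpr hba
  have hq0 : ((A : ℤ) : ℝ) * v ^ 2 = ((B : ℤ) : ℝ) * v + ((C : ℤ) : ℝ) := by
    push_cast
    rw [hvdef]
    field_simp
    linear_combination h
  -- irrationality of v
  have hirrv : Irrational v := by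
    by_contra hr
    obtain ⟨q, hq'⟩ := not_not.mp hr
    have hQ : (A : ℚ) * q ^ 2 = B * q + C := by
      have := hq0
      rw [← hq'] at this
      exact_mod_cast this
    have hr2 : ((2 * A * q - B : ℚ)) ^ 2 = ((B ^ 2 + 4 * A * C : ℕ) : ℚ) := by
      push_cast
      linear_combination 4 * (A : ℚ) * hQ
    have hirrs : Irrational (Real.sqrt ((B ^ 2 + 4 * A * C : ℕ) : ℝ)) :=
      irrational_sqrt_natCast_iff.mpr hdisc
    apply hirrs
    refine ⟨|2 * A * q - B|, ?_⟩
    have h5 : (((|2 * A * q - B| : ℚ) : ℝ)) ^ 2 = ((B ^ 2 + 4 * A * C : ℕ) : ℝ) := by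
      have : ((|2 * A * q - B| : ℚ)) ^ 2 = ((B ^ 2 + 4 * A * C : ℕ) : ℚ) := by
        rw [sq_abs]; exact hr2
      exact_mod_cast this
    rw [← h5, Real.sqrt_sq (by positivity)]
  have hinv := thea_invariant v A B C (by exact_mod_cast hA) (by exact_mod_cast hC)
    hv1 hirrv hq0
  have hirrall : ∀ n, Irrational (theaQ v n) := fun n => (hinv n).2.2.2.2.2
  set D : ℤ := (B : ℤ) ^ 2 + 4 * A * C with hDdef
  -- partial denominators in terms of complete quotients
  have hpd : ∀ j, (GenContFract.of v).partDens.get? j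
      = some ((⌊theaQ v (j + 1)⌋ : ℤ) : ℝ) := by
    intro j
    have hs := GenContFract.get?_of_eq_some_of_succ_get?_intFractPair_stream
      (thea_stream v hirrall (j + 1))
    exact GenContFract.partDen_eq_s_b hs
  -- pigeonhole
  set T := theaT v A B C with hTdef
  have hbound : ∀ n, ((T n).1, (T n).2.1) ∈ Finset.Icc (1 : ℤ) D ×ˢ Finset.Icc (-D) D := by
    intro n
    obtain ⟨h1, h2, h3, -, -, -⟩ := hinv n
    have hb1 := thea_int_le_sq (T n).2.1
    have hb2 := thea_int_le_sq (-(T n).2.1)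
    have hsq := sq_nonneg (T n).2.1
    simp only [Finset.mem_product, Finset.mem_Icc]
    refine ⟨⟨h1, ?_⟩, ?_, ?_⟩ <;> nlinarith
  obtain ⟨m0, hm0, n0, hn0, hmn, heq0⟩ :=
    Finset.exists_ne_map_eq_of_card_lt_of_maps_to
      (s := Finset.range ((Finset.Icc (1 : ℤ) D ×ˢ Finset.Icc (-D) D).card + 1))
      (t := Finset.Icc (1 : ℤ) D ×ˢ Finset.Icc (-D) D)
      (by simp) (fun n _ => hbound n)
  obtain ⟨m, n, hlt, heq⟩ : ∃ m n, m < n ∧ ((T m).1, (T m).2.1) = ((T n).1, (T n).2.1) := by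
    rcases hmn.lt_or_gt with hl | hl
    · exact ⟨m0, n0, hl, heq0⟩
    · exact ⟨n0, m0, hl, heq0.symm⟩
  obtain ⟨hAeq, hBeq⟩ := Prod.mk.inj heq
  have hCeq : (T m).2.2 = (T n).2.2 := by
    have h3m := (hinv m).2.2.1
    have h3n := (hinv n).2.2.1
    rw [hAeq, hBeq] at h3m
    have h9 : (4 * (T n).1) * (T m).2.2 = (4 * (T n).1) * (T n).2.2 := by linarith [h3m, h3n]
    exact mul_left_cancel₀ (by have h1 := (hinv n).1; omega) h9
  -- equal complete quotients
  have hxeq : theaQ v m = theaQ v n := by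
    have hqm := (hinv m).2.2.2.1
    have hqn := (hinv n).2.2.2.1
    rw [hAeq, hBeq, hCeq] at hqm
    exact thea_root_unique (T n).1 (T n).2.1 (T n).2.2 (hinv n).1 (hinv n).2.1
      (by linarith [(hinv m).2.2.2.2.1]) (by linarith [(hinv n).2.2.2.2.1]) hqm hqn
  set p := n - m with hpdef
  have hper : ∀ k, theaQ v (m + k + p) = theaQ v (m + k) := by
    intro k
    induction k with
    | zero =>
      have : m + 0 + p = n := by omega
      rw [this]
      simpa using hxeq.symm
    | succ k ih =>
      have e1 : m + (k + 1) + p = (m + k + p) + 1 := by omega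
      have e2 : m + (k + 1) = (m + k) + 1 := by omega
      rw [e1, e2]
      show (Int.fract (theaQ v (m + k + p)))⁻¹ = (Int.fract (theaQ v (m + k)))⁻¹
      rw [ih]
  refine ⟨m, p, by omega, ?_⟩
  intro k hk
  rw [hpd, hpd]
  have h7 := hper (k + 1 - m)
  rw [show m + (k + 1 - m) + p = k + p + 1 by omega,
    show m + (k + 1 - m) = k + 1 by omega] at h7
  rw [h7]
end

section
/- Theaetetus' general periodicity theorem (quadratic in defect): Let A, B, C be natural numbers with A ≥ 1 and C ≥ 1 such that the integer discriminant (B:ℤ)^2 - 4*A*C is not a perfect square in ℤ, and let a, b be real numbers with 0 < b < a satisfying A * a^2 + C * b^2 = B * (a*b). Then the anthyphairesis of a to b is eventually periodic: writing s for the sequence of partial denominators of GenContFract.of (a/b), there exist N and p > 0 such that s.get? (n + p) = s.get? n for all n ≥ N. -/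
open GenContFract

namespace Thea

/-! ### Quadratic root predicates -/

def QR (D P Q R : ℤ) (x : ℝ) : Prop :=
  P ≠ 0 ∧ Q ^ 2 - 4 * P * R = D ∧ (P : ℝ) * x ^ 2 + (Q : ℝ) * x + (R : ℝ) = 0

variable {D P Q R : ℤ} {x : ℝ}

theorem QR.sq (h : QR D P Q R x) : (2 * (P : ℝ) * x + (Q : ℝ)) ^ 2 = (D : ℝ) := by
  obtain ⟨h0, hd, hr⟩ := h
  have hd' : ((Q : ℝ)) ^ 2 - 4 * (P : ℝ) * (R : ℝ) = (D : ℝ) := by exact_mod_cast hd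
  linear_combination 4 * (P : ℝ) * hr + hd'

theorem QR.D_nonneg (h : QR D P Q R x) : 0 ≤ D := by
  have h1 : (0 : ℝ) ≤ (D : ℝ) := h.sq ▸ sq_nonneg _
  exact_mod_cast h1

theorem QR.D_pos (hds : ¬ IsSquare D) (h : QR D P Q R x) : 0 < D := by
  rcases h.D_nonneg.lt_or_eq with h1 | h1
  · exact h1
  · exact absurd (h1 ▸ (⟨0, rfl⟩ : IsSquare (0 : ℤ))) hds

theorem QR.irrational (hds : ¬ IsSquare D) (h : QR D P Q R x) : Irrational x := by
  have hD0 : 0 ≤ D := h.D_nonneg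
  have hs : Irrational (Real.sqrt (D : ℝ)) :=
    (irrational_sqrt_intCast_iff_of_nonneg hD0).mpr hds
  by_contra hx
  obtain ⟨q, hq⟩ : ∃ q : ℚ, (q : ℝ) = x := not_not.mp hx
  have h1 : Real.sqrt ((D : ℝ)) = |2 * (P : ℝ) * x + (Q : ℝ)| := by
    rw [← h.sq, Real.sqrt_sq_eq_abs]
  have h2 : |2 * (P : ℝ) * x + (Q : ℝ)| = ((|2 * (P : ℚ) * q + (Q : ℚ)| : ℚ) : ℝ) := by
    push_cast [hq]; ring_nf
  exact (h2 ▸ h1 ▸ hs) ⟨_, rfl⟩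

theorem QR.conj (h : QR D P Q R x) : QR D P Q R (-(Q : ℝ) / (P : ℝ) - x) := by
  obtain ⟨h0, hd, hr⟩ := h
  have hP : (P : ℝ) ≠ 0 := Int.cast_ne_zero.mpr h0
  refine ⟨h0, hd, ?_⟩
  field_simp
  linear_combination (P : ℝ) * hr

theorem QR.ne_conj (hds : ¬ IsSquare D) (h : QR D P Q R x) : x ≠ -(Q : ℝ) / (P : ℝ) - x := by
  intro he
  have hP : (P : ℝ) ≠ 0 := Int.cast_ne_zero.mpr h.1
  have h1 : 2 * (P : ℝ) * x + (Q : ℝ) = 0 := by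
    field_simp at he; linarith
  have h2 : (D : ℝ) = 0 := by rw [← h.sq, h1]; ring
  have h3 : D = 0 := by exact_mod_cast h2
  exact hds (h3 ▸ ⟨0, rfl⟩)

theorem Pnew_ne_zero (hds : ¬ IsSquare D) (hd : Q ^ 2 - 4 * P * R = D) (k : ℤ) :
    P * k ^ 2 + Q * k + R ≠ 0 := by
  intro h0
  exact hds ⟨2 * P * k + Q, by linear_combination -hd - 4 * P * h0⟩

theorem root_shift (hr : (P : ℝ) * x ^ 2 + (Q : ℝ) * x + (R : ℝ) = 0) (k : ℤ) {g : ℝ}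
    (hg : g ≠ 0) (hx : x = (k : ℝ) + g) :
    ((P * k ^ 2 + Q * k + R : ℤ) : ℝ) * (g⁻¹) ^ 2 + ((2 * P * k + Q : ℤ) : ℝ) * g⁻¹ + (P : ℝ) = 0 := by
  subst hx
  have haux : ((P * k ^ 2 + Q * k + R : ℤ) : ℝ) + ((2 * P * k + Q : ℤ) : ℝ) * g + (P : ℝ) * g ^ 2 = 0 := by
    push_cast
    linear_combination hr
  have heq : ((P * k ^ 2 + Q * k + R : ℤ) : ℝ) * (g⁻¹) ^ 2 + ((2 * P * k + Q : ℤ) : ℝ) * g⁻¹ + (P : ℝ)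
      = (((P * k ^ 2 + Q * k + R : ℤ) : ℝ) + ((2 * P * k + Q : ℤ) : ℝ) * g + (P : ℝ) * g ^ 2) * (g⁻¹) ^ 2 := by
    field_simp
  rw [heq, haux, zero_mul]

theorem other_root (hP : P ≠ 0) (h1 : (P : ℝ) * x ^ 2 + (Q : ℝ) * x + (R : ℝ) = 0) {t : ℝ}
    (h2 : (P : ℝ) * t ^ 2 + (Q : ℝ) * t + (R : ℝ) = 0) (hne : t ≠ x) :
    t = -(Q : ℝ) / (P : ℝ) - x := by
  have hP' : (P : ℝ) ≠ 0 := Int.cast_ne_zero.mpr hP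
  have key : (t - x) * ((P : ℝ) * (t + x) + (Q : ℝ)) = 0 := by linear_combination h2 - h1
  rcases mul_eq_zero.mp key with h | h
  · exact absurd (sub_eq_zero.mp h) hne
  · field_simp
    linarith

theorem int_abs_le_sq (z : ℤ) : |z| ≤ z ^ 2 := by
  rcases eq_or_ne z 0 with rfl | hz
  · simp
  · have h1 : 1 ≤ |z| := Int.one_le_abs hz
    nlinarith [sq_abs z, abs_nonneg z]

/-! ### The Gauss-map orbit -/

noncomputable def orb (v : ℝ) : ℕ → ℝ
  | 0 => v
  | n + 1 => (Int.fract (orb v n))⁻¹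

theorem orb_succ (v : ℝ) (n : ℕ) : orb v (n + 1) = (Int.fract (orb v n))⁻¹ := rfl

theorem fract_irr {y : ℝ} (hx : Irrational y) : Irrational (Int.fract y) := by
  rw [Int.fract]
  exact hx.sub_intCast _

theorem orb_irrational {v : ℝ} (hv : Irrational v) : ∀ n, Irrational (orb v n) := by
  intro n
  induction n with
  | zero => exact hv
  | succ n ih => exact (irrational_inv_iff).mpr (fract_irr ih)

theorem fract_ne_zero {y : ℝ} (hx : Irrational y) : Int.fract y ≠ 0 :=
  (fract_irr hx).ne_zero

theorem fract_pos {y : ℝ} (hx : Irrational y) : 0 < Int.fract y :=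
  (Int.fract_nonneg y).lt_of_ne (Ne.symm (fract_ne_zero hx))

theorem orb_gt_one {v : ℝ} (hv : Irrational v) (n : ℕ) : 1 < orb v (n + 1) := by
  rw [orb_succ]
  exact (one_lt_inv₀ (fract_pos (orb_irrational hv n))).mpr (Int.fract_lt_one _)

theorem floor_orb_pos {v : ℝ} (hv : Irrational v) (n : ℕ) : 1 ≤ ⌊orb v (n + 1)⌋ :=
  Int.le_floor.mpr (by exact_mod_cast (orb_gt_one hv n).le)

theorem stream_orb {v : ℝ} (hv : Irrational v) :
    ∀ n, IntFractPair.stream v n = some ⟨⌊orb v n⌋, Int.fract (orb v n)⟩ := by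
  intro n
  induction n with
  | zero => rfl
  | succ n ih =>
      have h := IntFractPair.stream_succ_of_some ih (fract_ne_zero (orb_irrational hv n))
      rw [h]
      rfl

theorem partDens_orb {v : ℝ} (hv : Irrational v) (n : ℕ) :
    (GenContFract.of v).partDens.get? n = some ((⌊orb v (n + 1)⌋ : ℤ) : ℝ) := by
  have hs := get?_of_eq_some_of_succ_get?_intFractPair_stream (stream_orb hv (n + 1))
  simp [GenContFract.partDens, Stream'.Seq.map_get?, hs]

theorem s_orb {v : ℝ} (hv : Irrational v) (n : ℕ) :
    (GenContFract.of v).s.get? n = some ⟨1, ((⌊orb v (n + 1)⌋ : ℤ) : ℝ)⟩ :=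
  get?_of_eq_some_of_succ_get?_intFractPair_stream (stream_orb hv (n + 1))

/-! ### Coefficients along the orbit -/

noncomputable def co (v : ℝ) (c0 : ℤ × ℤ × ℤ) : ℕ → ℤ × ℤ × ℤ
  | 0 => c0
  | n + 1 =>
      ((co v c0 n).1 * ⌊orb v n⌋ ^ 2 + (co v c0 n).2.1 * ⌊orb v n⌋ + (co v c0 n).2.2,
       2 * (co v c0 n).1 * ⌊orb v n⌋ + (co v c0 n).2.1,
       (co v c0 n).1)

theorem invariant {v : ℝ} {c0 : ℤ × ℤ × ℤ} (hds : ¬ IsSquare D)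
    (h0 : QR D c0.1 c0.2.1 c0.2.2 v) :
    ∀ n, QR D (co v c0 n).1 (co v c0 n).2.1 (co v c0 n).2.2 (orb v n) := by
  intro n
  induction n with
  | zero => exact h0
  | succ n ih =>
      have hx : Irrational (orb v n) := QR.irrational hds ih
      obtain ⟨hP, hd, hr⟩ := ih
      have hg : Int.fract (orb v n) ≠ 0 := fract_ne_zero hx
      have hxeq : orb v n = ((⌊orb v n⌋ : ℤ) : ℝ) + Int.fract (orb v n) :=
        (Int.floor_add_fract _).symm
      refine ⟨Pnew_ne_zero hds hd ⌊orb v n⌋, ?_, ?_⟩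
      · show (2 * (co v c0 n).1 * ⌊orb v n⌋ + (co v c0 n).2.1) ^ 2 -
            4 * ((co v c0 n).1 * ⌊orb v n⌋ ^ 2 + (co v c0 n).2.1 * ⌊orb v n⌋ + (co v c0 n).2.2) *
              (co v c0 n).1 = D
        linear_combination hd
      · show (((co v c0 n).1 * ⌊orb v n⌋ ^ 2 + (co v c0 n).2.1 * ⌊orb v n⌋ + (co v c0 n).2.2 : ℤ) : ℝ) *
              (orb v (n + 1)) ^ 2 +
            ((2 * (co v c0 n).1 * ⌊orb v n⌋ + (co v c0 n).2.1 : ℤ) : ℝ) * (orb v (n + 1)) +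
            ((co v c0 n).1 : ℝ) = 0
        rw [orb_succ]
        exact root_shift hr _ hg hxeq

/-- The conjugate orbit. -/
noncomputable def cnj (v : ℝ) (c0 : ℤ × ℤ × ℤ) (n : ℕ) : ℝ :=
  -((co v c0 n).2.1 : ℝ) / ((co v c0 n).1 : ℝ) - orb v n

theorem cnj_succ {v : ℝ} {c0 : ℤ × ℤ × ℤ} (hds : ¬ IsSquare D)
    (h0 : QR D c0.1 c0.2.1 c0.2.2 v) (n : ℕ) :
    cnj v c0 (n + 1) = (cnj v c0 n - ((⌊orb v n⌋ : ℤ) : ℝ))⁻¹ := by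
  have invn := invariant hds h0 n
  have invn1 := invariant hds h0 (n + 1)
  have hc : QR D (co v c0 n).1 (co v c0 n).2.1 (co v c0 n).2.2 (cnj v c0 n) := invn.conj
  have hcirr : Irrational (cnj v c0 n) := QR.irrational hds hc
  have hgne : cnj v c0 n - ((⌊orb v n⌋ : ℤ) : ℝ) ≠ 0 :=
    sub_ne_zero.mpr (hcirr.ne_int _)
  have hroot' := root_shift hc.2.2 ⌊orb v n⌋ hgne (by ring)
  have hne : (cnj v c0 n - ((⌊orb v n⌋ : ℤ) : ℝ))⁻¹ ≠ orb v (n + 1) := by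
    intro he
    rw [orb_succ] at he
    have h1 : cnj v c0 n - ((⌊orb v n⌋ : ℤ) : ℝ) = Int.fract (orb v n) := inv_injective he
    have h2 : cnj v c0 n = orb v n := by
      have := Int.floor_add_fract (orb v n)
      linarith
    exact QR.ne_conj hds invn h2.symm
  have hfin := other_root invn1.1 invn1.2.2 hroot' hne
  exact hfin.symm

end Thea

open Thea in
theorem theaetetus_periodicity_defect (A B C : ℕ) (hA : 1 ≤ A) (hC : 1 ≤ C)
    (hdisc : ¬ IsSquare ((B : ℤ) ^ 2 - 4 * (A : ℤ) * (C : ℤ)))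
    (a b : ℝ) (hb : 0 < b) (hba : b < a)
    (h : (A : ℝ) * a ^ 2 + (C : ℝ) * b ^ 2 = (B : ℝ) * (a * b)) :
    ∃ N p : ℕ, 0 < p ∧ ∀ n ≥ N,
      (GenContFract.of (a / b)).partDens.get? (n + p) =
        (GenContFract.of (a / b)).partDens.get? n := by
  classical
  set D : ℤ := (B : ℤ) ^ 2 - 4 * (A : ℤ) * (C : ℤ) with hDdef
  set v : ℝ := a / b with hvdef
  set c0 : ℤ × ℤ × ℤ := ((A : ℤ), -(B : ℤ), (C : ℤ)) with hc0def
  have hbne : b ≠ 0 := ne_of_gt hb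
  have hAne : (A : ℤ) ≠ 0 := by exact_mod_cast Nat.one_le_iff_ne_zero.mp hA
  have h0 : QR D c0.1 c0.2.1 c0.2.2 v := by
    rw [hc0def]
    refine ⟨?_, ?_, ?_⟩
    · show (A : ℤ) ≠ 0
      exact hAne
    · show (-(B : ℤ)) ^ 2 - 4 * (A : ℤ) * (C : ℤ) = D
      rw [hDdef]; ring
    · show ((A : ℤ) : ℝ) * v ^ 2 + (((-(B : ℤ)) : ℤ) : ℝ) * v + ((C : ℤ) : ℝ) = 0
      rw [hvdef]
      push_cast
      field_simp
      linear_combination h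
  have hinv : ∀ n, QR D (co v c0 n).1 (co v c0 n).2.1 (co v c0 n).2.2 (orb v n) :=
    invariant hdisc h0
  have hvirr : Irrational v := QR.irrational hdisc h0
  have hyrec : ∀ n, cnj v c0 (n + 1) = (cnj v c0 n - ((⌊orb v n⌋ : ℤ) : ℝ))⁻¹ :=
    cnj_succ hdisc h0
  have hyirr : ∀ n, Irrational (cnj v c0 n) := fun n => QR.irrational hdisc (hinv n).conj
  have hxney : ∀ n, orb v n ≠ cnj v c0 n := fun n => QR.ne_conj hdisc (hinv n)
  -- finishing move, given a repetition in the orbit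
  have key : ∀ m q, 0 < q → orb v m = orb v (m + q) →
      ∃ N p : ℕ, 0 < p ∧ ∀ n ≥ N,
        (GenContFract.of v).partDens.get? (n + p) = (GenContFract.of v).partDens.get? n := by
    intro m q hq hrep
    refine ⟨m, q, hq, ?_⟩
    have hper : ∀ j, orb v (m + j) = orb v (m + q + j) := by
      intro j
      induction j with
      | zero => simpa using hrep
      | succ j ih =>
          have e1 : m + (j + 1) = (m + j) + 1 := by omega
          have e2 : m + q + (j + 1) = (m + q + j) + 1 := by omega
          rw [e1, e2, orb_succ, orb_succ, ih]
    intro n hn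
    have h1 : n + 1 = m + (n + 1 - m) := by omega
    have h2 : n + q + 1 = m + q + (n + 1 - m) := by omega
    rw [partDens_orb hvirr, partDens_orb hvirr, h2, ← hper (n + 1 - m), ← h1]
  by_cases hcase : ∃ n, 1 ≤ n ∧ cnj v c0 n < 0
  · -- eventually reduced: coefficients are bounded, pigeonhole
    obtain ⟨n1, hn11, hn1neg⟩ := hcase
    have hstep : ∀ m, 1 ≤ m → cnj v c0 m < 0 → -1 < cnj v c0 (m + 1) ∧ cnj v c0 (m + 1) < 0 := by
      intro m hm hy
      obtain ⟨m', rfl⟩ : ∃ m', m = m' + 1 := ⟨m - 1, by omega⟩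
      have hk : (1 : ℝ) ≤ ((⌊orb v (m' + 1)⌋ : ℤ) : ℝ) := by
        exact_mod_cast floor_orb_pos hvirr m'
      have ht : cnj v c0 (m' + 1) - ((⌊orb v (m' + 1)⌋ : ℤ) : ℝ) < -1 := by linarith
      have ht0 : cnj v c0 (m' + 1) - ((⌊orb v (m' + 1)⌋ : ℤ) : ℝ) ≠ 0 := by linarith
      rw [hyrec (m' + 1)]
      constructor
      · have hc := mul_inv_cancel₀ ht0
        have hneg : (cnj v c0 (m' + 1) - ((⌊orb v (m' + 1)⌋ : ℤ) : ℝ))⁻¹ < 0 :=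
          inv_lt_zero.mpr (by linarith)
        nlinarith
      · exact inv_lt_zero.mpr (by linarith)
    have hyneg : ∀ m, n1 ≤ m → cnj v c0 m < 0 := by
      intro m hm
      induction m, hm using Nat.le_induction with
      | base => exact hn1neg
      | succ m hm ih => exact (hstep m (le_trans hn11 hm) ih).2
    have hybnd : ∀ m, n1 + 1 ≤ m → -1 < cnj v c0 m ∧ cnj v c0 m < 0 := by
      intro m hm
      obtain ⟨m', rfl⟩ : ∃ m', m = m' + 1 := ⟨m - 1, by omega⟩
      exact hstep m' (by omega) (hyneg m' (by omega))
    have hPsq : ∀ m, n1 + 1 ≤ m → ((co v c0 m).1) ^ 2 ≤ D := by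
      intro m hm
      obtain ⟨m', rfl⟩ : ∃ m', m = m' + 1 := ⟨m - 1, by omega⟩
      have hx1 : 1 < orb v (m' + 1) := orb_gt_one hvirr m'
      have hy := hybnd (m' + 1) hm
      have hPne : ((co v c0 (m' + 1)).1 : ℝ) ≠ 0 := Int.cast_ne_zero.mpr (hinv (m' + 1)).1
      have hsq := (hinv (m' + 1)).sq
      have hsq2 : ((co v c0 (m' + 1)).1 : ℝ) ^ 2 * (orb v (m' + 1) - cnj v c0 (m' + 1)) ^ 2
          = (D : ℝ) := by
        rw [← hsq]
        show ((co v c0 (m' + 1)).1 : ℝ) ^ 2 *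
            (orb v (m' + 1) - (-((co v c0 (m' + 1)).2.1 : ℝ) / ((co v c0 (m' + 1)).1 : ℝ)
              - orb v (m' + 1))) ^ 2 = _
        field_simp
        ring
      have hgt : 1 < orb v (m' + 1) - cnj v c0 (m' + 1) := by linarith [hy.2]
      have hs1 : (1 : ℝ) ≤ (orb v (m' + 1) - cnj v c0 (m' + 1)) ^ 2 := by nlinarith
      have hfin : ((co v c0 (m' + 1)).1 : ℝ) ^ 2 ≤ (D : ℝ) := by
        nlinarith [sq_nonneg ((co v c0 (m' + 1)).1 : ℝ)]
      exact_mod_cast hfin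
    set M : ℤ := D + 4 * D ^ 2 with hMdef
    have hDpos : 0 < D := QR.D_pos hdisc h0
    have hbnd : ∀ m, n1 + 2 ≤ m → |(co v c0 m).1| ≤ M ∧ |(co v c0 m).2.1| ≤ M := by
      intro m hm
      obtain ⟨m', rfl⟩ : ∃ m', m = m' + 1 := ⟨m - 1, by omega⟩
      have hP2 : ((co v c0 (m' + 1)).1) ^ 2 ≤ D := hPsq _ (by omega)
      have hP2' : ((co v c0 m').1) ^ 2 ≤ D := hPsq _ (by omega)
      have hRval : (co v c0 (m' + 1)).2.2 = (co v c0 m').1 := rfl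
      have habsP : |(co v c0 (m' + 1)).1| ≤ D := le_trans (int_abs_le_sq _) hP2
      have habsR : |(co v c0 (m' + 1)).2.2| ≤ D := by
        rw [hRval]; exact le_trans (int_abs_le_sq _) hP2'
      have hQ2 : ((co v c0 (m' + 1)).2.1) ^ 2 = D + 4 * (co v c0 (m' + 1)).1 * (co v c0 (m' + 1)).2.2 := by
        have := (hinv (m' + 1)).2.1
        linarith
      have hPR : (co v c0 (m' + 1)).1 * (co v c0 (m' + 1)).2.2 ≤ D ^ 2 := by
        have h1 : |(co v c0 (m' + 1)).1 * (co v c0 (m' + 1)).2.2| ≤ D ^ 2 := by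
          rw [abs_mul]
          calc |(co v c0 (m' + 1)).1| * |(co v c0 (m' + 1)).2.2| ≤ D * D :=
                mul_le_mul habsP habsR (abs_nonneg _) (le_of_lt hDpos)
            _ = D ^ 2 := by ring
        exact le_trans (le_abs_self _) h1
      have hQsq : ((co v c0 (m' + 1)).2.1) ^ 2 ≤ M := by
        rw [hQ2, hMdef]; linarith
      constructor
      · refine le_trans habsP ?_
        rw [hMdef]; nlinarith
      · exact le_trans (int_abs_le_sq _) hQsq
    -- pigeonhole
    set F : ℕ → ℤ × ℤ × Bool := fun m =>
      ((co v c0 m).1, (co v c0 m).2.1,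
        decide ((0 : ℝ) ≤ 2 * ((co v c0 m).1 : ℝ) * orb v m + ((co v c0 m).2.1 : ℝ))) with hFdef
    have hmaps : Set.MapsTo F (Set.Ici (n1 + 2))
        ((Set.Icc (-M) M) ×ˢ ((Set.Icc (-M) M) ×ˢ (Set.univ : Set Bool))) := by
      intro m hm
      obtain ⟨h1, h2⟩ := hbnd m hm
      simp only [hFdef, Set.mem_prod, Set.mem_Icc, Set.mem_univ, and_true]
      exact ⟨abs_le.mp h1, abs_le.mp h2⟩
    obtain ⟨m, hm, m', hm', hne, hFeq⟩ :=
      (Set.Ici_infinite (n1 + 2)).exists_ne_map_eq_of_mapsTo hmaps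
        ((Set.finite_Icc _ _).prod ((Set.finite_Icc _ _).prod Set.finite_univ))
    simp only [hFdef, Prod.mk.injEq] at hFeq
    obtain ⟨hPeq, hQeq, hBeq⟩ := hFeq
    have hiff := decide_eq_decide.mp hBeq
    have hsq1 := (hinv m).sq
    have hsq2 := (hinv m').sq
    have hxeq : orb v m = orb v m' := by
      set t1 : ℝ := 2 * ((co v c0 m).1 : ℝ) * orb v m + ((co v c0 m).2.1 : ℝ) with ht1
      set t2 : ℝ := 2 * ((co v c0 m').1 : ℝ) * orb v m' + ((co v c0 m').2.1 : ℝ) with ht2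
      have hprod : (t1 - t2) * (t1 + t2) = 0 := by
        rw [ht1, ht2]; linear_combination hsq1 - hsq2
      have ht12 : t1 = t2 := by
        rcases mul_eq_zero.mp hprod with h' | h'
        · linarith [sub_eq_zero.mp h']
        · have hsum : t1 + t2 = 0 := h'
          by_cases hpos : 0 ≤ t1
          · have : 0 ≤ t2 := hiff.mp hpos
            linarith
          · have h1 : ¬ (0 ≤ t2) := fun hh => hpos (hiff.mpr hh)
            push_neg at hpos h1
            linarith
      have hPne : (2 * ((co v c0 m').1 : ℝ)) ≠ 0 := by
        have h' : ((co v c0 m').1 : ℝ) ≠ 0 := Int.cast_ne_zero.mpr (hinv m').1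
        simpa using h'
      apply mul_left_cancel₀ hPne
      rw [ht1, ht2] at ht12
      rw [hPeq, hQeq] at ht12
      linarith [ht12]
    rcases hne.lt_or_gt with hlt | hlt
    · exact key m (m' - m) (by omega) (by rw [hxeq]; congr 1; omega)
    · exact key m' (m - m') (by omega) (by rw [← hxeq]; congr 1; omega)
  · -- conjugates never become negative: contradiction via uniqueness of CF limits
    exfalso
    push_neg at hcase
    have hpos : ∀ n, 1 ≤ n → 0 < cnj v c0 n := fun n hn =>
      (hcase n hn).lt_of_ne (Ne.symm (hyirr n).ne_zero)
    have hgap : ∀ n, 1 ≤ n → 0 < cnj v c0 n - ((⌊orb v n⌋ : ℤ) : ℝ) := by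
      intro n hn
      have h1 : 0 < cnj v c0 (n + 1) := hpos (n + 1) (by omega)
      rw [hyrec n] at h1
      exact inv_pos.mp h1
    have hgap1 : ∀ n, 1 ≤ n → cnj v c0 n - ((⌊orb v n⌋ : ℤ) : ℝ) < 1 := by
      intro n hn
      have h2 := hgap (n + 1) (by omega)
      have h3 : (1 : ℝ) ≤ ((⌊orb v (n + 1)⌋ : ℤ) : ℝ) := by
        exact_mod_cast floor_orb_pos hvirr n
      have h4 : 1 < cnj v c0 (n + 1) := by linarith
      rw [hyrec n] at h4
      exact (one_lt_inv₀ (hgap n hn)).mp h4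
    have hfract : ∀ n, 1 ≤ n → Int.fract (cnj v c0 n) = cnj v c0 n - ((⌊orb v n⌋ : ℤ) : ℝ) := by
      intro n hn
      have hfl : ⌊cnj v c0 n⌋ = ⌊orb v n⌋ := by
        rw [Int.floor_eq_iff]
        constructor
        · linarith [hgap n hn]
        · linarith [hgap1 n hn]
      rw [Int.fract, hfl]
    have hworb : ∀ j, orb (cnj v c0 1) j = cnj v c0 (j + 1) := by
      intro j
      induction j with
      | zero => rfl
      | succ j ih =>
          rw [orb_succ, ih, hfract (j + 1) (by omega), ← hyrec (j + 1)]
    have hv1orb : ∀ j, orb (orb v 1) j = orb v (j + 1) := by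
      intro j
      induction j with
      | zero => rfl
      | succ j ih => rw [orb_succ, ih, ← orb_succ]
    have hwirr : Irrational (cnj v c0 1) := hyirr 1
    have hv1irr : Irrational (orb v 1) := orb_irrational hvirr 1
    have hfloors : ∀ j, ⌊orb (cnj v c0 1) j⌋ = ⌊orb (orb v 1) j⌋ := by
      intro j
      rw [hworb, hv1orb]
      have hfl : ⌊cnj v c0 (j + 1)⌋ = ⌊orb v (j + 1)⌋ := by
        rw [Int.floor_eq_iff]
        constructor
        · linarith [hgap (j + 1) (by omega)]
        · linarith [hgap1 (j + 1) (by omega)]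
      exact hfl
    have hofeq : GenContFract.of (cnj v c0 1) = GenContFract.of (orb v 1) := by
      apply GenContFract.ext
      · rw [of_h_eq_floor, of_h_eq_floor]
        exact_mod_cast hfloors 0
      · apply Stream'.Seq.ext
        intro n
        rw [s_orb hwirr, s_orb hv1irr, hfloors (n + 1)]
    have ht1 : Filter.Tendsto (GenContFract.of (cnj v c0 1)).convs Filter.atTop
        (nhds (cnj v c0 1)) := of_convergence _
    have ht2 : Filter.Tendsto (GenContFract.of (orb v 1)).convs Filter.atTop
        (nhds (orb v 1)) := of_convergence _
    rw [hofeq] at ht1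
    exact hxney 1 (tendsto_nhds_unique ht2 ht1)
end

section
/- First anthyphairetic step for a pure quadratic (Proposition 6.2.1): Let A, C be natural numbers with 1 ≤ A < C and A * C not a perfect square, and let a, b be real numbers with 0 < b < a and A * a^2 = C * b^2. Then there exist a natural number k ≥ 1 and a real number c with 0 < c < b such that a = k * b + c, A * k^2 < C, and (C - A*k^2) * b^2 = (2*A*k) * (b*c) + A * c^2 (with C - A*k^2 a positive natural number). -/
theorem first_anthyphairetic_step (A C : ℕ) (hA : 1 ≤ A) (hAC : A < C)
    (hsq : ¬ IsSquare (A * C)) (a b : ℝ) (hb : 0 < b) (hba : b < a)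
    (h : (A : ℝ) * a ^ 2 = (C : ℝ) * b ^ 2) :
    ∃ (k : ℕ) (c : ℝ), 1 ≤ k ∧ 0 < c ∧ c < b ∧ a = (k : ℝ) * b + c ∧
      A * k ^ 2 < C ∧ 0 < C - A * k ^ 2 ∧
      ((C - A * k ^ 2 : ℕ) : ℝ) * b ^ 2 =
        ((2 * A * k : ℕ) : ℝ) * (b * c) + (A : ℝ) * c ^ 2 := by
  have ha : 0 < a := hb.trans hba
  set k : ℕ := ⌊a / b⌋₊ with hk
  have hk1 : 1 ≤ k := Nat.le_floor (by rw [Nat.cast_one, le_div_iff₀ hb]; linarith)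
  have hkle : (k : ℝ) * b ≤ a := by
    have := Nat.floor_le (a := a / b) (by positivity)
    calc (k : ℝ) * b ≤ (a / b) * b := by nlinarith
    _ = a := by field_simp
  set c : ℝ := a - k * b with hc
  have hab : a = (k : ℝ) * b + c := by ring
  have hcb : c < b := by
    have := Nat.lt_floor_add_one (a / b)
    have : a / b < (k : ℝ) + 1 := this
    have : a < ((k : ℝ) + 1) * b := by
      rw [div_lt_iff₀ hb] at this; linarith
    rw [hc]; linarith
  have hcpos : 0 < c := by
    rcases lt_or_eq_of_le (sub_nonneg.mpr hkle) with h' | h'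
    · rw [hc]; exact h'
    · exfalso
      have hakb : a = (k : ℝ) * b := by linarith
      have hAkC : (A : ℝ) * k ^ 2 = C := by
        rw [hakb] at h
        have h2 : ((A : ℝ) * k ^ 2) * b ^ 2 = (C : ℝ) * b ^ 2 := by linear_combination h
        exact mul_right_cancel₀ (by positivity) h2
      have hAkCn : A * k ^ 2 = C := by exact_mod_cast hAkC
      apply hsq
      exact ⟨A * k, by rw [← hAkCn]; ring⟩
  have hAk2 : A * k ^ 2 < C := by
    have h1 : (A : ℝ) * k ^ 2 < C := by
      have hkb : 0 < (k : ℝ) * b := by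
        have : (1 : ℝ) ≤ k := by exact_mod_cast hk1
        nlinarith
      have hA' : (0 : ℝ) < A := by exact_mod_cast hA
      have hlt : (k : ℝ) * b < a := by linarith
      have : (A : ℝ) * ((k : ℝ) * b) ^ 2 < (A : ℝ) * a ^ 2 :=
        mul_lt_mul_of_pos_left (by nlinarith) hA'
      rw [h] at this
      nlinarith
    exact_mod_cast h1
  refine ⟨k, c, hk1, hcpos, hcb, hab, hAk2, Nat.sub_pos_of_lt hAk2, ?_⟩
  push_cast [Nat.cast_sub hAk2.le]
  have : a = (k : ℝ) * b + c := hab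
  linear_combination -h
end

section
/- Anthyphairetic substitution for a quadratic in excess (Proposition 6.2.2): Let A, B, C be natural numbers with A ≥ 1 and C ≥ 1 such that B^2 + 4*A*C is not a perfect square, and let a, b be real numbers with 0 < b < a and A * a^2 = B * (a*b) + C * b^2. Then there exist a natural number k ≥ 1 and a real number c with 0 < c < b such that a = k * b + c, B < 2*A*k, A*k^2 < B*k + C, and (B*k + C - A*k^2) * b^2 = (2*A*k - B) * (b*c) + A * c^2 (where B*k + C - A*k^2 and 2*A*k - B are positive natural numbers). -/
set_option maxHeartbeats 1000000


theorem anthyphairetic_substitution_excess (A B C : ℕ) (hA : 1 ≤ A) (hC : 1 ≤ C)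
    (hdisc : ¬ IsSquare (B ^ 2 + 4 * A * C)) (a b : ℝ) (hb : 0 < b) (hba : b < a)
    (h : (A : ℝ) * a ^ 2 = (B : ℝ) * (a * b) + (C : ℝ) * b ^ 2) :
    ∃ (k : ℕ) (c : ℝ), 1 ≤ k ∧ 0 < c ∧ c < b ∧ a = (k : ℝ) * b + c ∧
      B < 2 * A * k ∧ A * k ^ 2 < B * k + C ∧
      ((B * k + C - A * k ^ 2 : ℕ) : ℝ) * b ^ 2 =
        ((2 * A * k - B : ℕ) : ℝ) * (b * c) + (A : ℝ) * c ^ 2 := by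
  set x : ℝ := a / b with hxdef
  have hbne : b ≠ 0 := hb.ne'
  have ha : a = x * b := by rw [hxdef, div_mul_cancel₀ a hbne]
  have hx1 : 1 < x := (one_lt_div hb).mpr hba
  have hx0 : 0 < x := lt_trans one_pos hx1
  have hx : (A : ℝ) * x ^ 2 = B * x + C := by
    have hb2 : (b : ℝ) ^ 2 ≠ 0 := pow_ne_zero 2 hbne
    apply mul_right_cancel₀ hb2
    rw [ha] at h
    ring_nf
    ring_nf at h
    linarith
  set k : ℕ := ⌊x⌋₊ with hkdef
  have hk1 : 1 ≤ k := Nat.le_floor (by exact_mod_cast hx1.le)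
  have hkle : (k : ℝ) ≤ x := Nat.floor_le hx0.le
  have hklt : (k : ℝ) < x := by
    rcases lt_or_eq_of_le hkle with h' | h'
    · exact h'
    · exfalso
      have hnat : A * k ^ 2 = B * k + C := by
        have : (A : ℝ) * (k:ℝ) ^ 2 = B * (k:ℝ) + C := by rw [h']; exact hx
        exact_mod_cast this
      have hBk : B ≤ 2 * A * k := by nlinarith
      apply hdisc
      refine ⟨2 * A * k - B, ?_⟩
      zify [hBk]
      nlinarith
  have hxlt : x < (k : ℝ) + 1 := Nat.lt_floor_add_one x
  -- f(k) < 0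
  have hfk : (A : ℝ) * k ^ 2 - B * k - C < 0 := by
    nlinarith [mul_pos (sub_pos.mpr hklt) (by positivity : (0:ℝ) < A * k * x + C)]
  -- f(k+1) > 0
  have hfk1 : (0 : ℝ) < A * ((k:ℝ) + 1) ^ 2 - B * ((k:ℝ)+1) - C := by
    nlinarith [mul_pos (sub_pos.mpr hxlt) (by positivity : (0:ℝ) < A * ((k:ℝ)+1) * x + C)]
  have hineq2 : A * k ^ 2 < B * k + C := by
    have : (A : ℝ) * (k:ℕ) ^ 2 < (B:ℝ) * k + C := by push_cast; linarith
    exact_mod_cast this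
  have hineq1 : B < 2 * A * k := by
    by_contra hcon
    push_neg at hcon
    have hcon' : (2 * A * k : ℝ) ≤ B := by exact_mod_cast hcon
    have hk1' : (1 : ℝ) ≤ (k : ℝ) := by exact_mod_cast hk1
    nlinarith
  have hab1 : (k : ℝ) * b < a := by
    rw [ha]; exact mul_lt_mul_of_pos_right hklt hb
  have hab2 : a < (k:ℝ) * b + b := by
    rw [ha]
    have := mul_lt_mul_of_pos_right hxlt hb
    linarith [this]
  refine ⟨k, a - k * b, hk1, by linarith, by linarith, by ring, hineq1, hineq2, ?_⟩
  · have h1 : ((B * k + C - A * k ^ 2 : ℕ) : ℝ) = (B:ℝ) * k + C - A * k ^ 2 := by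
      have := hineq2.le
      push_cast [this]
      ring
    have h2 : ((2 * A * k - B : ℕ) : ℝ) = 2 * (A:ℝ) * k - B := by
      have := hineq1.le
      push_cast [this]
      ring
    rw [h1, h2]
    linear_combination -h
end

section
/- Preservation of quadratic equations/Gnomons implies equal cross products (Proposition 7.1.3): Let A, B, C be natural numbers with A ≥ 1 and C ≥ 1, and let a, b, c, d be positive real numbers. If A * a^2 = B * (a*b) + C * b^2 and A * c^2 = B * (c*d) + C * d^2, then a * d = b * c. -/
theorem gnomon_preservation_cross_products (A B C : ℕ) (hA : 1 ≤ A) (hC : 1 ≤ C)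
    (a b c d : ℝ) (ha : 0 < a) (hb : 0 < b) (hc : 0 < c) (hd : 0 < d)
    (h1 : (A : ℝ) * a ^ 2 = (B : ℝ) * (a * b) + (C : ℝ) * b ^ 2)
    (h2 : (A : ℝ) * c ^ 2 = (B : ℝ) * (c * d) + (C : ℝ) * d ^ 2) :
    a * d = b * c := by
  have hA' : (1:ℝ) ≤ (A:ℝ) := by exact_mod_cast hA
  have hC' : (1:ℝ) ≤ (C:ℝ) := by exact_mod_cast hC
  by_contra h
  have key : ((A:ℝ)*(a*d+b*c)) * (a*d-b*c) = ((B:ℝ)*(b*d)) * (a*d-b*c) := by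
    linear_combination d^2*h1 - b^2*h2
  have hne : a*d-b*c ≠ 0 := sub_ne_zero.mpr h
  have heq : (A:ℝ)*(a*d+b*c) = (B:ℝ)*(b*d) := mul_right_cancel₀ hne key
  have contra : (A:ℝ)*(a*b*c) + (C:ℝ)*(b^2*d) = 0 := by
    linear_combination a*heq - d*h1
  nlinarith [mul_pos (mul_pos ha hb) hc, mul_pos (mul_pos hb hb) hd]
end

section
/- Preservation of quadratic equations implies equal anthyphairesis (Proposition 7.1.4): Let A, B, C be natural numbers with A ≥ 1 and C ≥ 1, and let a, b, c, d be positive real numbers. If A * a^2 = B * (a*b) + C * b^2 and A * c^2 = B * (c*d) + C * d^2, then the anthyphairesis of a to b equals the anthyphairesis of c to d, i.e., GenContFract.of (a/b) = GenContFract.of (c/d). -/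
theorem gnomon_preservation_equal_anthyphairesis (A B C : ℕ) (hA : 1 ≤ A) (hC : 1 ≤ C)
    (a b c d : ℝ) (ha : 0 < a) (hb : 0 < b) (hc : 0 < c) (hd : 0 < d)
    (h1 : (A : ℝ) * a ^ 2 = (B : ℝ) * (a * b) + (C : ℝ) * b ^ 2)
    (h2 : (A : ℝ) * c ^ 2 = (B : ℝ) * (c * d) + (C : ℝ) * d ^ 2) :
    GenContFract.of (a / b) = GenContFract.of (c / d) := by
  have hA' : (0:ℝ) < A := by exact_mod_cast hA
  have hC' : (0:ℝ) < C := by exact_mod_cast hC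
  set x := a / b with hx
  set y := c / d with hy
  have hxpos : 0 < x := div_pos ha hb
  have hypos : 0 < y := div_pos hc hd
  have hb2 : (b:ℝ) ^ 2 ≠ 0 := by positivity
  have hd2 : (d:ℝ) ^ 2 ≠ 0 := by positivity
  have e1 : (A:ℝ) * x ^ 2 = B * x + C := by
    rw [hx]
    field_simp
    linear_combination h1
  have e2 : (A:ℝ) * y ^ 2 = B * y + C := by
    rw [hy]
    field_simp
    linear_combination h2
  have hxy : x = y := by
    by_contra hne
    have key : (x - y) * ((A:ℝ) * (x + y) - B) = 0 := by linear_combination e1 - e2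
    have h3 : (A:ℝ) * (x + y) = B := by
      rcases mul_eq_zero.mp key with h | h
      · exact absurd (sub_eq_zero.mp h) hne
      · linarith
    nlinarith [mul_pos hxpos hypos]
  rw [hxy]
end

section
/- Remainders in terms of the generalized side and diameter numbers (Proposition 10.1.2): Let a, b be positive reals with a/b irrational, and let k : ℕ → ℕ record the anthyphairetic quotients of a to b, i.e., (GenContFract.of (a/b)).h = k 0 and for every j, the j-th partial denominator of GenContFract.of (a/b) equals k (j+1). Let p, q : ℕ → ℕ be the generalized side and diameter numbers: p 0 = 0, p 1 = 1, q 0 = 1, q 1 = k 0, and p (j+2) = k (j+1) * p (j+1) + p j, q (j+2) = k (j+1) * q (j+1) + q j. Let e : ℕ → ℝ be the sequence of anthyphairetic remainders, i.e., e 0 = a, e 1 = b, and e j = k j * e (j+1) + e (j+2) for all j. Then for every n, e (n+1) = (-1)^n * ((q n : ℝ) * b - (p n : ℝ) * a). -/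
theorem remainders_side_diameter (a b : ℝ) (ha : 0 < a) (hb : 0 < b)
    (hirr : Irrational (a / b)) (k : ℕ → ℕ)
    (hk0 : (GenContFract.of (a / b)).h = (k 0 : ℝ))
    (hk : ∀ j : ℕ, (GenContFract.of (a / b)).partDens.get? j = some ((k (j + 1) : ℝ)))
    (p q : ℕ → ℕ)
    (hp0 : p 0 = 0) (hp1 : p 1 = 1) (hq0 : q 0 = 1) (hq1 : q 1 = k 0)
    (hp : ∀ j : ℕ, p (j + 2) = k (j + 1) * p (j + 1) + p j)
    (hq : ∀ j : ℕ, q (j + 2) = k (j + 1) * q (j + 1) + q j)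
    (e : ℕ → ℝ) (he0 : e 0 = a) (he1 : e 1 = b)
    (he : ∀ j : ℕ, e j = (k j : ℝ) * e (j + 1) + e (j + 2)) :
    ∀ n : ℕ, e (n + 1) = (-1 : ℝ) ^ n * ((q n : ℝ) * b - (p n : ℝ) * a) := by
  intro n
  induction n using Nat.twoStepInduction with
  | zero => simp [he1, hq0, hp0]
  | one =>
    have h := he 0
    rw [he0, he1] at h
    have : e 2 = a - (k 0 : ℝ) * b := by linarith
    rw [this, hq1, hp1]
    push_cast
    ring
  | more m ih2 ih1 =>
    have h := he (m + 1)
    have : e (m + 3) = e (m + 1) - (k (m + 1) : ℝ) * e (m + 2) := by linarith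
    rw [show m + 2 + 1 = m + 3 from rfl, this, ih1, ih2, hp m, hq m]
    push_cast
    ring
end

section
/- Quadratic equation satisfied by a purely periodic anthyphairesis (Proposition 10.1.4[2]): Let n be a natural number, let a, b be positive reals with a/b irrational, and let k : ℕ → ℕ record the anthyphairetic quotients of a to b, i.e., (GenContFract.of (a/b)).h = k 0 and for every j the j-th partial denominator of GenContFract.of (a/b) equals k (j+1). Suppose the anthyphairesis is purely periodic with period n+1, i.e., k (j + (n+1)) = k j for all j. Let p, q : ℕ → ℕ be the generalized side and diameter numbers: p 0 = 0, p 1 = 1, q 0 = 1, q 1 = k 0, and p (j+2) = k (j+1) * p (j+1) + p j, q (j+2) = k (j+1) * q (j+1) + q j. Then p (n+1) * a^2 + p n * (a*b) = q (n+1) * (a*b) + q n * b^2 (equivalently, p_{n+1}·a^2 = (q_{n+1} - p_n)·a·b + q_n·b^2). -/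
open GenContFract

/-- Complete quotients of `x`. -/
noncomputable def cq (x : ℝ) : ℕ → ℝ
  | 0 => x
  | m + 1 => (Int.fract (cq x m))⁻¹

lemma cq_irr {x : ℝ} (h : Irrational x) : ∀ m, Irrational (cq x m)
  | 0 => h
  | m + 1 => by
    have h1 : Irrational (Int.fract (cq x m)) := by
      rw [← Int.self_sub_floor]
      exact (cq_irr h m).sub_intCast _
    exact h1.inv

lemma cq_s {x : ℝ} : ∀ m j, (GenContFract.of (cq x m)).s.get? j
    = (GenContFract.of x).s.get? (m + j)
  | 0, j => by simp [cq]
  | m + 1, j => by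
    have : (GenContFract.of (cq x (m + 1))).s.get? j
        = (GenContFract.of (cq x m)).s.get? (j + 1) := (of_s_succ _ _).symm
    rw [this, cq_s m (j + 1)]
    ring_nf

theorem purely_periodic_quadratic (n : ℕ) (a b : ℝ) (ha : 0 < a) (hb : 0 < b)
    (hirr : Irrational (a / b)) (k : ℕ → ℕ)
    (hk0 : (GenContFract.of (a / b)).h = (k 0 : ℝ))
    (hk : ∀ j : ℕ, (GenContFract.of (a / b)).partDens.get? j = some ((k (j + 1) : ℝ)))
    (hper : ∀ j : ℕ, k (j + (n + 1)) = k j)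
    (p q : ℕ → ℕ)
    (hp0 : p 0 = 0) (hp1 : p 1 = 1) (hq0 : q 0 = 1) (hq1 : q 1 = k 0)
    (hp : ∀ j : ℕ, p (j + 2) = k (j + 1) * p (j + 1) + p j)
    (hq : ∀ j : ℕ, q (j + 2) = k (j + 1) * q (j + 1) + q j) :
    (p (n + 1) : ℝ) * a ^ 2 + (p n : ℝ) * (a * b) =
      (q (n + 1) : ℝ) * (a * b) + (q n : ℝ) * b ^ 2 := by
  set x := a / b with hxdef
  have hbne : b ≠ 0 := ne_of_gt hb
  have hxpos : 0 < x := div_pos ha hb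
  -- the sequence entries are ⟨1, k (j+1)⟩
  have hsx : ∀ j, (GenContFract.of x).s.get? j = some ⟨1, (k (j + 1) : ℝ)⟩ := by
    intro j
    have h1 := hk j
    rw [partDens, Stream'.Seq.map_get?] at h1
    obtain ⟨gp, hgp, hgpb⟩ : ∃ gp, (GenContFract.of x).s.get? j = some gp
        ∧ gp.b = (k (j + 1) : ℝ) := by
      cases h2 : (GenContFract.of x).s.get? j with
      | none => rw [h2] at h1; simp at h1
      | some gp => rw [h2] at h1; exact ⟨gp, rfl, by simpa using h1⟩
    have hgpa : gp.a = 1 := (of_partNum_eq_one_and_exists_int_partDen_eq hgp).1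
    obtain ⟨ga, gb⟩ := gp
    rw [hgp]
    simp only at hgpa hgpb
    rw [hgpa, hgpb]
  -- fractional parts never vanish
  have hfr : ∀ m, Int.fract (cq x m) ≠ 0 := by
    intro m h
    have h1 : Irrational (Int.fract (cq x m)) := by
      rw [← Int.self_sub_floor]; exact (cq_irr hirr m).sub_intCast _
    exact (h1.ne_int 0) (by exact_mod_cast h)
  -- floors of complete quotients
  have hfloor : ∀ m, (⌊cq x m⌋ : ℝ) = (k m : ℝ) := by
    intro m
    cases m with
    | zero =>
      have := of_h_eq_floor (v := x)
      rw [hk0] at this; exact this.symm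
    | succ m =>
      have h1 : (GenContFract.of (cq x m)).s.head = some ⟨1, (⌊(Int.fract (cq x m))⁻¹⌋ : ℝ)⟩ :=
        of_s_head (hfr m)
      have h2 : (GenContFract.of (cq x m)).s.head = some ⟨1, (k (m + 1) : ℝ)⟩ := by
        show (GenContFract.of (cq x m)).s.get? 0 = _
        rw [cq_s m 0]; simpa using hsx m
      rw [h1] at h2
      have h3 : ((⌊(Int.fract (cq x m))⁻¹⌋ : ℝ)) = (k (m + 1) : ℝ) := by
        injection h2 with h2'
        exact congrArg GenContFract.Pair.b h2'
      exact h3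
  -- the stream of x in terms of complete quotients
  have hstream : ∀ m, IntFractPair.stream x m = some (IntFractPair.of (cq x m)) := by
    intro m
    induction m with
    | zero => exact IntFractPair.stream_zero x
    | succ m ih =>
      have := IntFractPair.stream_succ_of_some ih (by simpa [IntFractPair.of] using hfr m)
      simpa [IntFractPair.of, cq] using this
  -- purely periodic ⇒ the (n+1)-st complete quotient equals x
  have hyx : cq x (n + 1) = x := by
    have hofeq : GenContFract.of (cq x (n + 1)) = GenContFract.of x := by
      have hh : (GenContFract.of (cq x (n + 1))).h = (GenContFract.of x).h := by
        rw [of_h_eq_floor, hfloor (n + 1), hk0]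
        norm_cast
        simpa using hper 0
      have hs : (GenContFract.of (cq x (n + 1))).s = (GenContFract.of x).s := by
        apply Stream'.Seq.ext
        intro j
        rw [cq_s (n + 1) j, hsx j]
        have : n + 1 + j = (j + 1 - 1) + (n + 1) := by omega
        rw [show (GenContFract.of x).s.get? (n + 1 + j) = some ⟨1, (k (n + 1 + j + 1) : ℝ)⟩
          from hsx (n + 1 + j)]
        have : k (n + 1 + j + 1) = k (j + 1) := by
          have := hper (j + 1); rw [← this]; ring_nf
        rw [this]
      exact GenContFract.ext hh hs
    have t1 : Filter.Tendsto (GenContFract.of (cq x (n + 1))).convs Filter.atTop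
        (nhds (cq x (n + 1))) := of_convergence _
    have t2 : Filter.Tendsto (GenContFract.of x).convs Filter.atTop (nhds x) :=
      of_convergence _
    rw [hofeq] at t1
    exact tendsto_nhds_unique t1 t2
  -- continuants are the p/q numbers
  have hconts : ∀ m, (GenContFract.of x).contsAux m = ⟨(q m : ℝ), (p m : ℝ)⟩
      ∧ (GenContFract.of x).contsAux (m + 1) = ⟨(q (m + 1) : ℝ), (p (m + 1) : ℝ)⟩ := by
    intro m
    induction m with
    | zero =>
      constructor
      · rw [zeroth_contAux_eq_one_zero, hq0, hp0]; norm_num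
      · rw [first_contAux_eq_h_one, hk0, hq1, hp1]; norm_num
    | succ m ih =>
      refine ⟨ih.2, ?_⟩
      have := contsAux_recurrence (hsx m) ih.1 ih.2
      rw [this, hp m, hq m]
      push_cast
      norm_num [mul_comm]
  -- 1 ≤ k (j+1)
  have hk1 : ∀ j, 1 ≤ k (j + 1) := by
    intro j
    have := of_one_le_get?_partDen (hk j)
    exact_mod_cast this
  -- 1 ≤ p (m+1)
  have hp1' : ∀ m, 1 ≤ p (m + 1) := by
    intro m
    induction m with
    | zero => exact le_of_eq hp1.symm
    | succ m ih =>
      rw [hp m]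
      have := hk1 m
      nlinarith
  -- the key identity
  have hfrn := hstream n
  have hcorr := compExactValue_correctness_of_stream_eq_some hfrn
  rw [GenContFract.compExactValue] at hcorr
  have hfr' : (IntFractPair.of (cq x n)).fr = Int.fract (cq x n) := rfl
  rw [hfr', if_neg (hfr n)] at hcorr
  have hinv : (Int.fract (cq x n))⁻¹ = x := by
    rw [show (Int.fract (cq x n))⁻¹ = cq x (n + 1) by simp [cq]]
    exact hyx
  rw [(hconts n).1, (hconts n).2, hinv] at hcorr
  simp only [nextConts, nextNum, nextDen] at hcorr
  -- denominator is positive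
  have hden : (0 : ℝ) < x * (p (n + 1) : ℝ) + 1 * (p n : ℝ) := by
    have h1 : (1 : ℝ) ≤ (p (n + 1) : ℝ) := by exact_mod_cast hp1' n
    have h2 : (0 : ℝ) ≤ (p n : ℝ) := Nat.cast_nonneg _
    nlinarith
  rw [eq_div_iff (ne_of_gt hden)] at hcorr
  -- finish by algebra
  have hxx : x * b = a := div_mul_cancel₀ a hbne
  rw [hxdef] at hcorr
  field_simp at hcorr
  refine mul_right_cancel₀ hbne ?_
  linear_combination b * hcorr
end
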